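/- The derivation relation ⊢_{S†} (the direct derivation relation determined by the rule set S†) is sound and complete for the fragment S†: for every set Θ of S†-formulas and every S†-formula θ, Θ ⊢_{S†} θ if and only if Θ ⊨ θ. -/
import Mathlib


/-!
Syllogistic logics (Pratt-Hartmann & Moss, "Logics for the Relational Syllogistic").

Unary atoms and binary atoms are encoded by `ℕ` (two disjoint copies).
-/

namespace Syllogistic

/-- Unary literals: a unary atom `p` or its negation `p̄`. -/
inductive Lit : Type
  | pos : ℕ → Lit
  | neg : ℕ → Lit
deriving DecidableEq

/-- Binary literals: a binary atom `r` or its negation `r̄`. -/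
inductive BLit : Type
  | pos : ℕ → BLit
  | neg : ℕ → BLit
deriving DecidableEq

/-- Bar (negation) on unary literals. -/
def Lit.bar : Lit → Lit
  | .pos p => .neg p
  | .neg p => .pos p

/-- Bar (negation) on binary literals. -/
def BLit.bar : BLit → BLit
  | .pos r => .neg r
  | .neg r => .pos r

/-- A unary literal is positive if it is an atom. -/
def Lit.isPos : Lit → Prop
  | .pos _ => True
  | .neg _ => False

/-- A binary literal is positive if it is an atom. -/
def BLit.isPos : BLit → Prop
  | .pos _ => True
  | .neg _ => False

/-- e-terms: a unary literal `l`, or `∃(l,t)`, or `∀(l,t)`. -/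
inductive ETerm : Type
  | lit : Lit → ETerm
  | ex : Lit → BLit → ETerm
  | al : Lit → BLit → ETerm
deriving DecidableEq

/-- The e-term consisting of a single positive unary atom. -/
def atomE (p : ℕ) : ETerm := .lit (.pos p)

/-- Bar on e-terms: `∀(l,t)‾ = ∃(l,t̄)` and `∃(l,t)‾ = ∀(l,t̄)`. -/
def ETerm.bar : ETerm → ETerm
  | .lit l => .lit l.bar
  | .ex l t => .al l t.bar
  | .al l t => .ex l t.bar

/-- c-terms: a unary literal, or `∃(p,t)`/`∀(p,t)` with `p` a unary atom. -/
def ETerm.isC : ETerm → Prop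
  | .lit _ => True
  | .ex l _ => l.isPos
  | .al l _ => l.isPos

/-- Positive c-terms: the literals occurring in them are positive. -/
def ETerm.isPosC : ETerm → Prop
  | .lit l => l.isPos
  | .ex l t => l.isPos ∧ t.isPos
  | .al l t => l.isPos ∧ t.isPos

/-- R*†-formulas: `∃(e,f)` or `∀(e,f)` for e-terms `e`, `f`. -/
inductive Formula : Type
  | ex : ETerm → ETerm → Formula
  | al : ETerm → ETerm → Formula
deriving DecidableEq

/-- Negation of a formula: `∀(e,f)‾ = ∃(e,f̄)`, `∃(e,f)‾ = ∀(e,f̄)`. -/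
def Formula.bar : Formula → Formula
  | .ex e f => .al e f.bar
  | .al e f => .ex e f.bar

/-- The silent identification: `∃(e,f)` with `∃(f,e)`, and `∀(e,f)` with `∀(f̄,ē)`. -/
def Formula.swap : Formula → Formula
  | .ex e f => .ex f e
  | .al e f => .al f.bar e.bar

/-- Two formulas are identified if they are equal or are swaps of each other. -/
def FormEquiv (φ ψ : Formula) : Prop := ψ = φ ∨ ψ = φ.swap

/-- An absurdity is a formula of the form `∃(e,ē)`. -/
def IsAbsurd (φ : Formula) : Prop := ∃ e : ETerm, φ = .ex e e.bar

/-- A substitution maps unary atoms to unary atoms and binary atoms to binary atoms. -/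
structure Subst where
  u : ℕ → ℕ
  b : ℕ → ℕ

def Lit.subst (g : Subst) : Lit → Lit
  | .pos p => .pos (g.u p)
  | .neg p => .neg (g.u p)

def BLit.subst (g : Subst) : BLit → BLit
  | .pos r => .pos (g.b r)
  | .neg r => .neg (g.b r)

def ETerm.subst (g : Subst) : ETerm → ETerm
  | .lit l => .lit (l.subst g)
  | .ex l t => .ex (l.subst g) (t.subst g)
  | .al l t => .al (l.subst g) (t.subst g)

/-- Atom-wise application of a substitution to a formula. -/
def Formula.subst (g : Subst) : Formula → Formula
  | .ex e f => .ex (e.subst g) (f.subst g)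
  | .al e f => .al (e.subst g) (f.subst g)

/-- A structure over a domain `A`: an interpretation of every unary atom as a
subset of `A` and of every binary atom as a binary relation on `A`.
(Non-emptiness of the domain is imposed where structures are quantified over.) -/
structure Interp (A : Type) where
  up : ℕ → Set A
  br : ℕ → Set (A × A)

def Interp.litI {A : Type} (M : Interp A) : Lit → Set A
  | .pos p => M.up p
  | .neg p => (M.up p)ᶜ

def Interp.blitI {A : Type} (M : Interp A) : BLit → Set (A × A)
  | .pos r => M.br r
  | .neg r => (M.br r)ᶜ

/-- Interpretation of e-terms. -/
def Interp.etermI {A : Type} (M : Interp A) : ETerm → Set A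
  | .lit l => M.litI l
  | .ex l t => {a | ∃ b ∈ M.litI l, (a, b) ∈ M.blitI t}
  | .al l t => {a | ∀ b ∈ M.litI l, (a, b) ∈ M.blitI t}

/-- Truth of a formula in a structure. -/
def Interp.Sat {A : Type} (M : Interp A) : Formula → Prop
  | .al e f => M.etermI e ⊆ M.etermI f
  | .ex e f => (M.etermI e ∩ M.etermI f).Nonempty

/-- Truth of a set of formulas in a structure. -/
def Interp.SatSet {A : Type} (M : Interp A) (Θ : Set Formula) : Prop :=
  ∀ θ ∈ Θ, M.Sat θ

/-- `Θ ⊨ θ`: every structure (with non-empty domain) satisfying `Θ` satisfies `θ`. -/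
def Entails (Θ : Set Formula) (θ : Formula) : Prop :=
  ∀ (A : Type), Nonempty A → ∀ M : Interp A, M.SatSet Θ → M.Sat θ

/-- `Θ` is satisfied in some structure with non-empty domain. -/
def Satisfiable (Θ : Set Formula) : Prop :=
  ∃ (A : Type), Nonempty A ∧ ∃ M : Interp A, M.SatSet Θ

/-- A syllogistic rule: a finite set of antecedents together with a consequent. -/
structure SylRule where
  ants : Finset Formula
  con : Formula

/-- A rule is sound if its antecedents entail its consequent. -/
def SylRule.Sound (R : SylRule) : Prop := Entails (↑R.ants) R.con

/-- A rule is a rule *in* the fragment `F` if all its formulas lie in `F`. -/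
def RuleIn (F : Set Formula) (R : SylRule) : Prop :=
  (∀ ψ ∈ R.ants, ψ ∈ F) ∧ R.con ∈ F

/-- The instance of a rule under a substitution. -/
def SylRule.inst (g : Subst) (R : SylRule) : SylRule :=
  ⟨R.ants.image (Formula.subst g), R.con.subst g⟩

/-- Two rules are the same modulo the identification of formulas. -/
def RuleEquiv (R R' : SylRule) : Prop :=
  (∀ ψ ∈ R.ants, ∃ ψ' ∈ R'.ants, FormEquiv ψ ψ') ∧
  (∀ ψ' ∈ R'.ants, ∃ ψ ∈ R.ants, FormEquiv ψ ψ') ∧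
  FormEquiv R.con R'.con

/-- The direct derivation relation `⊢_X` determined by a set `X` of syllogistic
rules: premises may be used, and instances of rules applied; formulas are
treated up to the silent identification. -/
inductive Derives (X : Set SylRule) : Set Formula → Formula → Prop
  | mem {Θ : Set Formula} {θ : Formula} : θ ∈ Θ → Derives X Θ θ
  | rule {Θ : Set Formula} (R : SylRule) (g : Subst) :
      R ∈ X → (∀ ψ ∈ R.ants, Derives X Θ (ψ.subst g)) →
      Derives X Θ (R.con.subst g)
  | ident {Θ : Set Formula} {φ ψ : Formula} :
      Derives X Θ φ → FormEquiv φ ψ → Derives X Θ ψ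

/-- The indirect derivation relation `⊩_X`: as `⊢_X`, together with
*reductio ad absurdum*. -/
inductive IDerives (X : Set SylRule) : Set Formula → Formula → Prop
  | mem {Θ : Set Formula} {θ : Formula} : θ ∈ Θ → IDerives X Θ θ
  | rule {Θ : Set Formula} (R : SylRule) (g : Subst) :
      R ∈ X → (∀ ψ ∈ R.ants, IDerives X Θ (ψ.subst g)) →
      IDerives X Θ (R.con.subst g)
  | ident {Θ : Set Formula} {φ ψ : Formula} :
      IDerives X Θ φ → FormEquiv φ ψ → IDerives X Θ ψ
  | raa {Θ : Set Formula} {θ b : Formula} :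
      IsAbsurd b → IDerives X (Θ ∪ {θ.bar}) b → IDerives X Θ θ

/-- Soundness of a derivation relation for the fragment `F`. -/
def SoundFor (F : Set Formula) (D : Set Formula → Formula → Prop) : Prop :=
  ∀ (Θ : Set Formula) (θ : Formula), Θ ⊆ F → θ ∈ F → D Θ θ → Entails Θ θ

/-- Completeness of a derivation relation for the fragment `F`. -/
def CompleteFor (F : Set Formula) (D : Set Formula → Formula → Prop) : Prop :=
  ∀ (Θ : Set Formula) (θ : Formula), Θ ⊆ F → θ ∈ F → Entails Θ θ → D Θ θ

/-- Refutation-completeness for the fragment `F`: every unsatisfiable set of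
`F`-formulas derives some absurdity. -/
def RefutationCompleteFor (F : Set Formula) (D : Set Formula → Formula → Prop) : Prop :=
  ∀ Θ : Set Formula, Θ ⊆ F → ¬ Satisfiable Θ → ∃ b, IsAbsurd b ∧ D Θ b

/-- Consistency of a set of formulas with respect to `⊩_X`. -/
def Consistent (X : Set SylRule) (Θ : Set Formula) : Prop :=
  ¬ ∃ b, IsAbsurd b ∧ IDerives X Θ b

/-! ### The six fragments -/

/-- The fragment `S`: `∃(p,l)`, `∃(l,p)`, `∀(p,l)`, `∀(l,p̄)`. -/
def FragS : Set Formula :=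
  {φ | (∃ (p : ℕ) (l : Lit), φ = .ex (atomE p) (.lit l)) ∨
       (∃ (p : ℕ) (l : Lit), φ = .ex (.lit l) (atomE p)) ∨
       (∃ (p : ℕ) (l : Lit), φ = .al (atomE p) (.lit l)) ∨
       (∃ (p : ℕ) (l : Lit), φ = .al (.lit l) (.lit (.neg p)))}

/-- The fragment `S†`: `∃(l,m)`, `∀(l,m)` for unary literals `l`, `m`. -/
def FragSdag : Set Formula :=
  {φ | ∃ l m : Lit, φ = .ex (.lit l) (.lit m) ∨ φ = .al (.lit l) (.lit m)}

/-- The fragment `R`: `∃(p,c)`, `∃(c,p)`, `∀(p,c)`, `∀(c,p̄)` for a c-term `c`. -/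
def FragR : Set Formula :=
  {φ | ∃ (p : ℕ) (c : ETerm), c.isC ∧
       (φ = .ex (atomE p) c ∨ φ = .ex c (atomE p) ∨
        φ = .al (atomE p) c ∨ φ = .al c (.lit (.neg p)))}

/-- The fragment `R†`: `∃(l,e)`, `∃(e,l)`, `∀(l,e)`, `∀(e,l)` for an e-term `e`. -/
def FragRdag : Set Formula :=
  {φ | ∃ (l : Lit) (e : ETerm),
       φ = .ex (.lit l) e ∨ φ = .ex e (.lit l) ∨
       φ = .al (.lit l) e ∨ φ = .al e (.lit l)}

/-- The fragment `R*`: `∃(c⁺,d)`, `∃(d,c⁺)`, `∀(c⁺,d)`, `∀(d,c⁺‾)` with `c⁺` a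
positive c-term and `d` a c-term. -/
def FragRstar : Set Formula :=
  {φ | ∃ c d : ETerm, c.isPosC ∧ d.isC ∧
       (φ = .ex c d ∨ φ = .ex d c ∨ φ = .al c d ∨ φ = .al d c.bar)}

/-- The fragment `R*†`: all formulas. -/
def FragRstardag : Set Formula := Set.univ

/-- The six syllogistic fragments. -/
def IsFragment (F : Set Formula) : Prop :=
  F = FragS ∨ F = FragSdag ∨ F = FragR ∨ F = FragRdag ∨ F = FragRstar ∨ F = FragRstardag

/-! ### Rule sets -/

/-- The rule set `S`: (D1), (D2), (D3), (B), (A), (T), (I), (X). -/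
def RuleSetS : Set SylRule :=
  {R | (∃ (p q : ℕ) (l : Lit),
          R = ⟨{.al (atomE q) (.lit l), .ex (atomE p) (atomE q)}, .ex (atomE p) (.lit l)⟩) ∨
       (∃ (p q : ℕ) (l : Lit),
          R = ⟨{.ex (atomE p) (.lit l), .al (atomE p) (atomE q)}, .ex (atomE q) (.lit l)⟩) ∨
       (∃ (p q : ℕ) (l : Lit),
          R = ⟨{.al (atomE q) (.lit l.bar), .ex (atomE p) (.lit l)}, .ex (atomE p) (.lit (.neg q))⟩) ∨
       (∃ (p q : ℕ) (l : Lit),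
          R = ⟨{.al (atomE p) (atomE q), .al (atomE q) (.lit l)}, .al (atomE p) (.lit l)⟩) ∨
       (∃ (p : ℕ) (l : Lit),
          R = ⟨{.al (atomE p) (.lit (.neg p))}, .al (atomE p) (.lit l)⟩) ∨
       (∃ p : ℕ, R = ⟨∅, .al (atomE p) (atomE p)⟩) ∨
       (∃ (p : ℕ) (l : Lit),
          R = ⟨{.ex (atomE p) (.lit l)}, .ex (atomE p) (atomE p)⟩) ∨
       (∃ φ ψ : Formula, φ ∈ FragS ∧ ψ ∈ FragS ∧ R = ⟨{ψ, ψ.bar}, φ⟩)}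

/-- The rule set `S†`: (D), (B), (A), (T), (I), (N), (X). -/
def RuleSetSdag : Set SylRule :=
  {R | (∃ l m n : Lit,
          R = ⟨{.ex (.lit l) (.lit n), .al (.lit l) (.lit m)}, .ex (.lit m) (.lit n)⟩) ∨
       (∃ l m n : Lit,
          R = ⟨{.al (.lit l) (.lit m), .al (.lit m) (.lit n)}, .al (.lit l) (.lit n)⟩) ∨
       (∃ l m : Lit, R = ⟨{.al (.lit l) (.lit l.bar)}, .al (.lit l) (.lit m)⟩) ∨
       (∃ l : Lit, R = ⟨∅, .al (.lit l) (.lit l)⟩) ∨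
       (∃ l m : Lit, R = ⟨{.ex (.lit l) (.lit m)}, .ex (.lit l) (.lit l)⟩) ∨
       (∃ l : Lit, R = ⟨{.al (.lit l.bar) (.lit l)}, .ex (.lit l) (.lit l)⟩) ∨
       (∃ φ ψ : Formula, φ ∈ FragSdag ∧ ψ ∈ FragSdag ∧ R = ⟨{ψ, ψ.bar}, φ⟩)}

/-- The rules (B), (T) and (A) of the rule set `S†`. -/
def RuleSetBTA : Set SylRule :=
  {R | (∃ l m n : Lit,
          R = ⟨{.al (.lit l) (.lit m), .al (.lit m) (.lit n)}, .al (.lit l) (.lit n)⟩) ∨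
       (∃ l : Lit, R = ⟨∅, .al (.lit l) (.lit l)⟩) ∨
       (∃ l m : Lit, R = ⟨{.al (.lit l) (.lit l.bar)}, .al (.lit l) (.lit m)⟩)}

/-- The rule set `R`: (D1), (D2), (D3), (B), (T), (I), (A), (II), (∀∀), (∃∃), (∀∃). -/
def RuleSetR : Set SylRule :=
  {R | (∃ (p q : ℕ) (c : ETerm), c.isC ∧
          R = ⟨{.ex (atomE p) (atomE q), .al (atomE q) c}, .ex (atomE p) c⟩) ∨
       (∃ (p q : ℕ) (c : ETerm), c.isC ∧
          R = ⟨{.al (atomE p) (atomE q), .ex (atomE p) c}, .ex (atomE q) c⟩) ∨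
       (∃ (p q : ℕ) (c : ETerm), c.isC ∧
          R = ⟨{.al (atomE q) c.bar, .ex (atomE p) c}, .ex (atomE p) (.lit (.neg q))⟩) ∨
       (∃ (p q : ℕ) (c : ETerm), c.isC ∧
          R = ⟨{.al (atomE p) (atomE q), .al (atomE q) c}, .al (atomE p) c⟩) ∨
       (∃ p : ℕ, R = ⟨∅, .al (atomE p) (atomE p)⟩) ∨
       (∃ (p : ℕ) (c : ETerm), c.isC ∧
          R = ⟨{.ex (atomE p) c}, .ex (atomE p) (atomE p)⟩) ∨
       (∃ (p : ℕ) (c : ETerm), c.isC ∧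
          R = ⟨{.al (atomE p) (.lit (.neg p))}, .al (atomE p) c⟩) ∨
       (∃ (p q : ℕ) (t : BLit),
          R = ⟨{.ex (atomE p) (.ex (.pos q) t)}, .ex (atomE q) (atomE q)⟩) ∨
       (∃ (p q q' : ℕ) (t : BLit),
          R = ⟨{.al (atomE p) (.al (.pos q') t), .ex (atomE q) (atomE q')},
               .al (atomE p) (.ex (.pos q) t)⟩) ∨
       (∃ (p q q' : ℕ) (t : BLit),
          R = ⟨{.ex (atomE p) (.ex (.pos q) t), .al (atomE q) (atomE q')},
               .ex (atomE p) (.ex (.pos q') t)⟩) ∨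
       (∃ (p q q' : ℕ) (t : BLit),
          R = ⟨{.al (atomE p) (.ex (.pos q) t), .al (atomE q) (atomE q')},
               .al (atomE p) (.ex (.pos q') t)⟩)}

/-- The rule set `R*`: (T), (I), (B), (D1), (D2), (J), (K), (L), (II), (Z), (W). -/
def RuleSetRstar : Set SylRule :=
  {R | (∃ c : ETerm, c.isPosC ∧ R = ⟨∅, .al c c⟩) ∨
       (∃ c d : ETerm, c.isPosC ∧ d.isC ∧ R = ⟨{.ex c d}, .ex c c⟩) ∨
       (∃ b c d : ETerm, b.isPosC ∧ c.isPosC ∧ d.isC ∧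
          R = ⟨{.al b c, .al c d}, .al b d⟩) ∨
       (∃ b c d : ETerm, b.isPosC ∧ c.isPosC ∧ d.isC ∧
          R = ⟨{.ex b c, .al c d}, .ex b d⟩) ∨
       (∃ b c d : ETerm, b.isPosC ∧ c.isPosC ∧ d.isC ∧
          R = ⟨{.al b c, .ex b d}, .ex c d⟩) ∨
       (∃ p q r : ℕ,
          R = ⟨{.al (atomE p) (atomE q)},
               .al (.al (.pos q) (.pos r)) (.al (.pos p) (.pos r))⟩) ∨
       (∃ p q r : ℕ,
          R = ⟨{.al (atomE p) (atomE q)},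
               .al (.ex (.pos p) (.pos r)) (.ex (.pos q) (.pos r))⟩) ∨
       (∃ p q r : ℕ,
          R = ⟨{.ex (atomE p) (atomE q)},
               .al (.al (.pos p) (.pos r)) (.ex (.pos q) (.pos r))⟩) ∨
       (∃ p q r : ℕ,
          R = ⟨{.ex (atomE q) (.ex (.pos p) (.pos r))}, .ex (atomE p) (atomE p)⟩) ∨
       (∃ (p r : ℕ) (c : ETerm), c.isPosC ∧
          R = ⟨{.al (atomE p) (.lit (.neg p))}, .al c (.al (.pos p) (.pos r))⟩) ∨
       (∃ p r : ℕ,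
          R = ⟨{.al (atomE p) (.lit (.neg p))},
               .ex (.al (.pos p) (.pos r)) (.al (.pos p) (.pos r))⟩)}

/-! ### Auxiliary notions for particular statements -/

/-- Universal S†-formulas. -/
def IsUnivSdag (φ : Formula) : Prop := ∃ l m : Lit, φ = .al (.lit l) (.lit m)

/-- Existential S†-formulas. -/
def IsExSdag (φ : Formula) : Prop := ∃ l m : Lit, φ = .ex (.lit l) (.lit m)

/-- The closure `V^Φ` of a set of unary literals: all `m` with
`Φ ⊢_BTA ∀(l,m)` for some `l ∈ V`. -/
def litClosure (Φ : Set Formula) (V : Set Lit) : Set Lit :=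
  {m | ∃ l ∈ V, Derives RuleSetBTA Φ (.al (.lit l) (.lit m))}

/-- Membership in a set of formulas, modulo the silent identification. -/
def MemMod (Γ : Set Formula) (φ : Formula) : Prop := ∃ ψ ∈ Γ, FormEquiv φ ψ

/-- The reachability relation `c ⇒ d` determined by `Γ`. -/
def Reach (Γ : Set Formula) (c d : ETerm) : Prop :=
  c = d ∨ ∃ (k : ℕ) (p : ℕ → ℕ), c = atomE (p 0) ∧
    MemMod Γ (.al (atomE (p k)) d) ∧
    ∀ i < k, MemMod Γ (.al (atomE (p i)) (atomE (p (i + 1))))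

/-- `V ⇒ d` for a set `V` of c-terms. -/
def ReachSet (Γ : Set Formula) (V : Set ETerm) (d : ETerm) : Prop :=
  ∃ c ∈ V, Reach Γ c d

/-- The witness sets `B_k`; the formal object `b_{V,i}` is encoded as the
pair `(V, i)`. -/
def BSet (Γ : Set Formula) : ℕ → Set (Set ETerm × ℕ)
  | 0 => {x | ∃ (p : ℕ) (c : ETerm), c.isC ∧ MemMod Γ (.ex (atomE p) c) ∧
            x = ({atomE p, c}, 0)}
  | k + 1 => BSet Γ k ∪
      {x | ∃ (p i : ℕ), (i = 1 ∨ i = 2) ∧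
        (∃ y ∈ BSet Γ k, ∃ t : BLit, ReachSet Γ y.1 (.ex (.pos p) t)) ∧
        x = ({atomE p}, i)}

/-- The witness set `B = ⋃_k B_k`. -/
def BAll (Γ : Set Formula) : Set (Set ETerm × ℕ) := ⋃ k, BSet Γ k

/-- Condition (C). -/
def CondC (Γ : Set Formula) : Prop :=
  ∃ (V : Set ETerm) (i : ℕ) (W : Set ETerm) (j : ℕ),
    (V, i) ∈ BAll Γ ∧ (W, j) ∈ BAll Γ ∧
    ∃ q o r : ℕ,
      ((ReachSet Γ V (atomE q) ∧ ReachSet Γ V (.lit (.neg q))) ∨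
       (ReachSet Γ V (.ex (.pos q) (.neg r)) ∧ ReachSet Γ V (.al (.pos o) (.pos r)) ∧
         Reach Γ (atomE q) (atomE o)) ∨
       (ReachSet Γ V (.al (.pos q) (.neg r)) ∧ ReachSet Γ V (.ex (.pos o) (.pos r)) ∧
         Reach Γ (atomE o) (atomE q)) ∨
       (ReachSet Γ V (.al (.pos q) (.neg r)) ∧ ReachSet Γ V (.al (.pos o) (.pos r)) ∧
         ReachSet Γ W (atomE q) ∧ ReachSet Γ W (atomE o)))

/-- The set `Γ` of R-formulas used in the proof that `R` admits no sound
and complete direct syllogistic system (indices `0,…,n-1`). -/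
def GammaSet (n : ℕ) (p : ℕ → ℕ) (r : ℕ) : Set Formula :=
  {φ | (∃ i, i + 1 < n ∧ φ = .al (atomE (p i)) (.ex (.pos (p (i + 1))) (.pos r))) ∨
       φ = .al (atomE (p 0)) (.al (.pos (p (n - 1))) (.pos r)) ∨
       (∃ q : ℕ, φ = .al (atomE q) (atomE q)) ∨
       (∃ i j, i < j ∧ j < n ∧ φ = .al (atomE (p i)) (.lit (.neg (p j))))}

/-- `Γ` is R*-complete: for every R*-formula `θ`, `θ ∈ Γ` or `θ̄ ∈ Γ`. -/
def RstarComplete (Γ : Set Formula) : Prop :=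
  ∀ θ ∈ FragRstar, θ ∈ Γ ∨ Formula.bar θ ∈ Γ

/-- Domain of the canonical structure for `Γ`: triples `(c₁,c₂,Q)` of two
positive c-terms and a quantifier (`Bool`, with `true` rendering `∃` and
`false` rendering `∀`) such that `Γ ⊩_{R*} ∃(c₁,c₂)`. -/
abbrev CanonA (Γ : Set Formula) : Type :=
  {x : ETerm × ETerm × Bool //
    x.1.isPosC ∧ x.2.1.isPosC ∧ IDerives RuleSetRstar Γ (.ex x.1 x.2.1)}

/-- The canonical structure constructed from `Γ`. -/
def CanonInterp (Γ : Set Formula) : Interp (CanonA Γ) where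
  up p := {x | IDerives RuleSetRstar Γ (.al x.val.1 (atomE p)) ∨
               IDerives RuleSetRstar Γ (.al x.val.2.1 (atomE p))}
  br r := {ab |
      (∃ c ∈ ({ab.1.val.1, ab.1.val.2.1} : Set ETerm),
       ∃ d ∈ ({ab.2.val.1, ab.2.val.2.1} : Set ETerm),
       ∃ q : ℕ,
         IDerives RuleSetRstar Γ (.al c (.al (.pos q) (.pos r))) ∧
         IDerives RuleSetRstar Γ (.al d (atomE q))) ∨
      (ab.2.val.2.2 = true ∧
       ∃ q : ℕ, ab.2.val.1 = atomE q ∧ ab.2.val.2.1 = atomE q ∧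
       ∃ c ∈ ({ab.1.val.1, ab.1.val.2.1} : Set ETerm),
         IDerives RuleSetRstar Γ (.al c (.ex (.pos q) (.pos r))))}


/-! ### Basic lemmas -/

@[simp] lemma Lit.bar_bar (l : Lit) : l.bar.bar = l := by cases l <;> rfl

def idSubst : Subst := ⟨id, id⟩

@[simp] lemma Lit.subst_id (l : Lit) : l.subst idSubst = l := by cases l <;> rfl
@[simp] lemma BLit.subst_id (t : BLit) : t.subst idSubst = t := by cases t <;> rfl
@[simp] lemma ETerm.subst_id (e : ETerm) : e.subst idSubst = e := by
  cases e <;> simp [ETerm.subst]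
@[simp] lemma Formula.subst_id (φ : Formula) : φ.subst idSubst = φ := by
  cases φ <;> simp [Formula.subst]

lemma Lit.bar_subst (g : Subst) (l : Lit) : (l.bar).subst g = (l.subst g).bar := by
  cases l <;> rfl
lemma BLit.bar_subst (g : Subst) (t : BLit) : (t.bar).subst g = (t.subst g).bar := by
  cases t <;> rfl
lemma ETerm.bar_subst (g : Subst) (e : ETerm) : (e.bar).subst g = (e.subst g).bar := by
  cases e <;> simp [ETerm.subst, ETerm.bar, Lit.bar_subst, BLit.bar_subst]
lemma Formula.bar_subst (g : Subst) (φ : Formula) : (φ.bar).subst g = (φ.subst g).bar := by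
  cases φ <;> simp [Formula.subst, Formula.bar, ETerm.bar_subst]

lemma litI_bar {A : Type} (M : Interp A) (l : Lit) : M.litI l.bar = (M.litI l)ᶜ := by
  cases l <;> simp [Interp.litI, Lit.bar]
lemma blitI_bar {A : Type} (M : Interp A) (t : BLit) : M.blitI t.bar = (M.blitI t)ᶜ := by
  cases t <;> simp [Interp.blitI, BLit.bar]

lemma etermI_bar {A : Type} (M : Interp A) (e : ETerm) : M.etermI e.bar = (M.etermI e)ᶜ := by
  cases e with
  | lit l => exact litI_bar M l
  | ex l t =>
      ext a
      simp [ETerm.bar, Interp.etermI, blitI_bar]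
  | al l t =>
      ext a
      simp [ETerm.bar, Interp.etermI, blitI_bar]

lemma sat_bar {A : Type} (M : Interp A) (φ : Formula) : M.Sat φ.bar ↔ ¬ M.Sat φ := by
  cases φ with
  | ex e f =>
      show M.etermI e ⊆ M.etermI f.bar ↔ _
      rw [etermI_bar, Set.subset_compl_iff_disjoint_right, Set.disjoint_iff_inter_eq_empty]
      simp [Interp.Sat, Set.not_nonempty_iff_eq_empty]
  | al e f =>
      show (M.etermI e ∩ M.etermI f.bar).Nonempty ↔ _
      rw [etermI_bar]
      constructor
      · rintro ⟨a, ha, hc⟩ hsub; exact hc (hsub ha)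
      · intro h
        rcases Set.not_subset.1 h with ⟨a, ha, hb⟩
        exact ⟨a, ha, hb⟩

lemma sat_swap {A : Type} (M : Interp A) (φ : Formula) : M.Sat φ.swap ↔ M.Sat φ := by
  cases φ with
  | ex e f => show (M.etermI f ∩ M.etermI e).Nonempty ↔ _; rw [Set.inter_comm]; rfl
  | al e f =>
      show M.etermI f.bar ⊆ M.etermI e.bar ↔ _
      rw [etermI_bar, etermI_bar, Set.compl_subset_compl]; rfl

lemma sat_equiv {A : Type} (M : Interp A) {φ ψ : Formula} (h : FormEquiv φ ψ) :
    M.Sat ψ ↔ M.Sat φ := by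
  rcases h with h | h <;> subst h
  · rfl
  · exact sat_swap M φ

/-! ### Soundness -/

lemma ruleSound {A : Type} (M : Interp A) (hA : Nonempty A) (R : SylRule)
    (hR : R ∈ RuleSetSdag) (g : Subst)
    (h : ∀ ψ ∈ R.ants, M.Sat (ψ.subst g)) : M.Sat (R.con.subst g) := by
  rcases hR with ⟨l, m, n, rfl⟩ | ⟨l, m, n, rfl⟩ | ⟨l, m, rfl⟩ | ⟨l, rfl⟩ | ⟨l, m, rfl⟩ |
    ⟨l, rfl⟩ | ⟨φ, ψ, _, _, rfl⟩
  · -- D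
    have h1 := h (Formula.ex (.lit l) (.lit n)) (by simp)
    have h2 := h (Formula.al (.lit l) (.lit m)) (by simp)
    obtain ⟨a, ha1, ha2⟩ := h1
    exact ⟨a, h2 ha1, ha2⟩
  · -- B
    have h1 := h (Formula.al (.lit l) (.lit m)) (by simp)
    have h2 := h (Formula.al (.lit m) (.lit n)) (by simp)
    exact h1.trans h2
  · -- A
    have h1 := h (Formula.al (.lit l) (.lit l.bar)) (by simp)
    intro a ha
    have : a ∈ M.etermI ((ETerm.lit l.bar).subst g) := h1 ha
    rw [show (ETerm.lit l.bar).subst g = ((ETerm.lit l).subst g).bar from by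
      simp [ETerm.subst, ETerm.bar, Lit.bar_subst], etermI_bar] at this
    exact absurd ha this
  · -- T
    exact fun a ha => ha
  · -- I
    obtain ⟨a, ha1, _⟩ := h (Formula.ex (.lit l) (.lit m)) (by simp)
    exact ⟨a, ha1, ha1⟩
  · -- N
    have h1 := h (Formula.al (.lit l.bar) (.lit l)) (by simp)
    obtain ⟨a⟩ := hA
    have ha : a ∈ M.etermI ((ETerm.lit l).subst g) := by
      by_cases hc : a ∈ M.etermI ((ETerm.lit l).subst g)
      · exact hc
      · apply h1
        rw [show (ETerm.lit l.bar).subst g = ((ETerm.lit l).subst g).bar from by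
          simp [ETerm.subst, ETerm.bar, Lit.bar_subst], etermI_bar]
        exact hc
    exact ⟨a, ha, ha⟩
  · -- X
    have h1 := h ψ (by simp)
    have h2 := h ψ.bar (by simp)
    rw [Formula.bar_subst, sat_bar] at h2
    exact absurd h1 h2

theorem sdag_sound {Θ : Set Formula} {θ : Formula}
    (h : Derives RuleSetSdag Θ θ) : Entails Θ θ := by
  induction h with
  | mem h => exact fun A hA M hM => hM _ h
  | rule R g hR _ IH =>
      intro A hA M hM
      exact ruleSound M hA R hR g (fun ψ hψ => IH ψ hψ A hA M hM)
  | ident _ he IH =>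
      intro A hA M hM
      exact (sat_equiv M he).2 (IH A hA M hM)
/-! ### Completeness -/

section Completeness

variable (Θ : Set Formula)

def Imp (l m : Lit) : Prop := Derives RuleSetSdag Θ (.al (.lit l) (.lit m))
def Iex (l m : Lit) : Prop := Derives RuleSetSdag Θ (.ex (.lit l) (.lit m))

lemma derives_rule0 {c : Formula} (h : (⟨∅, c⟩ : SylRule) ∈ RuleSetSdag) :
    Derives RuleSetSdag Θ c := by
  have := Derives.rule (X := RuleSetSdag) (Θ := Θ) ⟨∅, c⟩ idSubst h (by simp)
  simpa using this

lemma derives_rule1 {a c : Formula} (h : (⟨{a}, c⟩ : SylRule) ∈ RuleSetSdag)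
    (ha : Derives RuleSetSdag Θ a) : Derives RuleSetSdag Θ c := by
  have := Derives.rule (X := RuleSetSdag) (Θ := Θ) ⟨{a}, c⟩ idSubst h ?_
  · simpa using this
  · intro ψ hψ
    simp only [Finset.mem_singleton] at hψ
    subst hψ; simpa using ha

lemma derives_rule2 {a b c : Formula} (h : (⟨{a, b}, c⟩ : SylRule) ∈ RuleSetSdag)
    (ha : Derives RuleSetSdag Θ a) (hb : Derives RuleSetSdag Θ b) :
    Derives RuleSetSdag Θ c := by
  have := Derives.rule (X := RuleSetSdag) (Θ := Θ) ⟨{a, b}, c⟩ idSubst h ?_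
  · simpa using this
  · intro ψ hψ
    simp only [Finset.mem_insert, Finset.mem_singleton] at hψ
    rcases hψ with rfl | rfl
    · simpa using ha
    · simpa using hb

lemma impT (l : Lit) : Imp Θ l l :=
  derives_rule0 Θ (Or.inr (Or.inr (Or.inr (Or.inl ⟨l, rfl⟩))))

lemma impB {l m n : Lit} (h1 : Imp Θ l m) (h2 : Imp Θ m n) : Imp Θ l n :=
  derives_rule2 Θ (Or.inr (Or.inl ⟨l, m, n, rfl⟩)) h1 h2

lemma impA {l : Lit} (m : Lit) (h : Imp Θ l l.bar) : Imp Θ l m :=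
  derives_rule1 Θ (Or.inr (Or.inr (Or.inl ⟨l, m, rfl⟩))) h

lemma impContra {l m : Lit} (h : Imp Θ l m) : Imp Θ m.bar l.bar :=
  Derives.ident h (Or.inr rfl)

lemma exSym {l m : Lit} (h : Iex Θ l m) : Iex Θ m l :=
  Derives.ident h (Or.inr rfl)

lemma exI {l m : Lit} (h : Iex Θ l m) : Iex Θ l l :=
  derives_rule1 Θ (Or.inr (Or.inr (Or.inr (Or.inr (Or.inl ⟨l, m, rfl⟩))))) h

lemma exN {l : Lit} (h : Imp Θ l.bar l) : Iex Θ l l :=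
  derives_rule1 Θ (Or.inr (Or.inr (Or.inr (Or.inr (Or.inr (Or.inl ⟨l, rfl⟩)))))) h

lemma exD {l m n : Lit} (h1 : Iex Θ l n) (h2 : Imp Θ l m) : Iex Θ m n :=
  derives_rule2 Θ (Or.inl ⟨l, m, n, rfl⟩) h1 h2

lemma exX (φ : Formula) (hφ : φ ∈ FragSdag) {l m : Lit}
    (h1 : Iex Θ l m) (h2 : Imp Θ l m.bar) : Derives RuleSetSdag Θ φ :=
  derives_rule2 Θ
    (Or.inr (Or.inr (Or.inr (Or.inr (Or.inr (Or.inr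
      ⟨φ, Formula.ex (.lit l) (.lit m), hφ, (by exact ⟨l, m, Or.inl rfl⟩), rfl⟩))))))
    h1 h2

lemma impContra' {l m : Lit} (h : Imp Θ l m.bar) : Imp Θ m l.bar := by
  have := impContra Θ h
  rwa [Lit.bar_bar] at this

lemma impContra'' {l m : Lit} (h : Imp Θ l.bar m) : Imp Θ m.bar l := by
  have := impContra Θ h
  rwa [Lit.bar_bar] at this

lemma impContra3 {l m : Lit} (h : Imp Θ l.bar m.bar) : Imp Θ m l := by
  have := impContra Θ h
  rwa [Lit.bar_bar, Lit.bar_bar] at this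

lemma impUniv {m : Lit} (h : Imp Θ m.bar m) : ∀ z, Imp Θ z m := by
  intro z
  have h1 : Imp Θ m.bar z.bar := impA Θ z.bar (by rwa [Lit.bar_bar])
  have h2 := impContra Θ h1
  rwa [Lit.bar_bar, Lit.bar_bar] at h2

lemma impUniv2 {k w : Lit} (h1 : Imp Θ k w) (h2 : Imp Θ k.bar w) : ∀ z, Imp Θ z w :=
  impUniv Θ (impB Θ (impContra'' Θ h2) h1)

lemma exXY {x y : Lit} (hx : ∀ z, Imp Θ z x) (hy : ∀ z, Imp Θ z y) : Iex Θ x y :=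
  exSym Θ (exD Θ (exN Θ (hx x.bar)) (hy x))

/-- The consistent ("fine") sets of literals used to build the canonical model. -/
def Fine (x y : Lit) (U : Set Lit) : Prop :=
  (∀ l ∈ U, ∀ m, Imp Θ l m → m ∈ U) ∧ (∀ l ∈ U, l.bar ∉ U) ∧ ¬(x ∈ U ∧ y ∈ U)

lemma fine_empty (x y : Lit) : Fine Θ x y ∅ := by
  refine ⟨?_, ?_, ?_⟩ <;> simp

lemma exists_maxFine {x y : Lit} {U₀ : Set Lit} (h : Fine Θ x y U₀) :
    ∃ U, U₀ ⊆ U ∧ Maximal (Fine Θ x y) U := by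
  have key : ∀ c ⊆ {U | Fine Θ x y U}, IsChain (· ⊆ ·) c → c.Nonempty →
      ∃ ub ∈ {U | Fine Θ x y U}, ∀ s ∈ c, s ⊆ ub := by
    intro c hc hchain hne
    refine ⟨⋃₀ c, ⟨?_, ?_, ?_⟩, fun s hs => Set.subset_sUnion_of_mem hs⟩
    · rintro l hl m him
      rcases Set.mem_sUnion.1 hl with ⟨s, hs, hls⟩
      exact Set.mem_sUnion.2 ⟨s, hs, (hc hs).1 l hls m him⟩
    · rintro l hl hlb
      rcases Set.mem_sUnion.1 hl with ⟨s, hs, hls⟩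
      rcases Set.mem_sUnion.1 hlb with ⟨t, ht, hlt⟩
      rcases hchain.total hs ht with hst | hts
      · exact (hc ht).2.1 l (hst hls) hlt
      · exact (hc hs).2.1 l hls (hts hlt)
    · rintro ⟨hx, hy⟩
      rcases Set.mem_sUnion.1 hx with ⟨s, hs, hxs⟩
      rcases Set.mem_sUnion.1 hy with ⟨t, ht, hyt⟩
      rcases hchain.total hs ht with hst | hts
      · exact (hc ht).2.2 ⟨hst hxs, hyt⟩
      · exact (hc hs).2.2 ⟨hxs, hts hyt⟩
  obtain ⟨m, hm1, hm2⟩ := zorn_subset_nonempty {U | Fine Θ x y U} key U₀ h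
  exact ⟨m, hm1, hm2⟩

lemma ext_fail {x y : Lit} {U : Set Lit} (hU : Maximal (Fine Θ x y) U)
    {k : Lit} (hk : k ∉ U) (hkb : k.bar ∉ U) :
    (∀ w, Imp Θ k w) ∨ (Imp Θ k x ∧ Imp Θ k y) ∨ (x ∈ U ∧ Imp Θ k y) ∨
      (Imp Θ k x ∧ y ∈ U) := by
  by_contra hgoal
  have hne : ¬ Fine Θ x y (U ∪ {m | Imp Θ k m}) := by
    intro hF
    have hsub : U ∪ {m | Imp Θ k m} ⊆ U :=
      hU.2 hF Set.subset_union_left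
    exact hk (hsub (Or.inr (impT Θ k)))
  apply hne
  refine ⟨?_, ?_, ?_⟩
  · rintro l hl m him
    rcases hl with hl | hl
    · exact Or.inl (hU.1.1 l hl m him)
    · exact Or.inr (impB Θ hl him)
  · rintro l hl hlb
    rcases hl with hl | hl
    · rcases hlb with hlb | hlb
      · exact hU.1.2.1 l hl hlb
      · exact hkb (hU.1.1 l hl _ (impContra' Θ hlb))
    · rcases hlb with hlb | hlb
      · exact hkb (hU.1.1 _ hlb _ (impContra Θ hl))
      · exact hgoal (Or.inl (fun w => impA Θ w (impB Θ hl (impContra' Θ hlb))))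
  · rintro ⟨hx, hy⟩
    rcases hx with hx | hx <;> rcases hy with hy | hy
    · exact hU.1.2.2 ⟨hx, hy⟩
    · exact hgoal (Or.inr (Or.inr (Or.inl ⟨hx, hy⟩)))
    · exact hgoal (Or.inr (Or.inr (Or.inr ⟨hx, hy⟩)))
    · exact hgoal (Or.inr (Or.inl ⟨hx, hy⟩))

lemma maxFine_complete {x y : Lit} (hnxy : ¬ Iex Θ x y) {U : Set Lit}
    (hU : Maximal (Fine Θ x y) U) (p : ℕ) :
    Lit.pos p ∈ U ∨ Lit.neg p ∈ U := by
  by_contra hcon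
  push_neg at hcon
  obtain ⟨hp, hn⟩ := hcon
  have F1 := ext_fail Θ hU (k := Lit.pos p) hp hn
  have F2 := ext_fail Θ hU (k := Lit.neg p) hn hp
  have hclosed := hU.1.1
  have hpair := hU.1.2.2
  have univ : ∀ {w : Lit}, Imp Θ (Lit.pos p) w → Imp Θ (Lit.neg p) w → ∀ z, Imp Θ z w :=
    fun h1 h2 => impUniv2 Θ (k := Lit.pos p) h1 h2
  have H1 : (∀ z, Imp Θ z x) → (∀ z, Imp Θ z y) → False :=
    fun hx hy => hnxy (exXY Θ hx hy)
  have H2 : (∀ z, Imp Θ z y) → x ∈ U → False :=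
    fun hy hx => hpair ⟨hx, hclosed x hx y (hy x)⟩
  have H3 : (∀ z, Imp Θ z x) → y ∈ U → False :=
    fun hx hy => hpair ⟨hclosed y hy x (hx y), hy⟩
  rcases F1 with h1 | ⟨h1x, h1y⟩ | ⟨h1x, h1y⟩ | ⟨h1x, h1y⟩ <;>
    rcases F2 with h2 | ⟨h2x, h2y⟩ | ⟨h2x, h2y⟩ | ⟨h2x, h2y⟩
  · exact H1 (univ (h1 x) (h2 x)) (univ (h1 y) (h2 y))
  · exact H1 (univ (h1 x) h2x) (univ (h1 y) h2y)
  · exact H2 (univ (h1 y) h2y) h2x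
  · exact H3 (univ (h1 x) h2x) h2y
  · exact H1 (univ h1x (h2 x)) (univ h1y (h2 y))
  · exact H1 (univ h1x h2x) (univ h1y h2y)
  · exact H2 (univ h1y h2y) h2x
  · exact H3 (univ h1x h2x) h2y
  · exact H2 (univ h1y (h2 y)) h1x
  · exact H2 (univ h1y h2y) h1x
  · exact H2 (univ h1y h2y) h1x
  · exact hpair ⟨h1x, h2y⟩
  · exact H3 (univ h1x (h2 x)) h1y
  · exact H3 (univ h1x h2x) h1y
  · exact hpair ⟨h2x, h1y⟩
  · exact H3 (univ h1x h2x) h1y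

lemma noSelfBar {x y q : Lit} (hnxy : ¬ Iex Θ x y) (h : Iex Θ q q.bar) : False := by
  apply hnxy
  apply exX Θ _ (by exact ⟨x, y, Or.inl rfl⟩) h
  rw [Lit.bar_bar]; exact impT Θ q

lemma exTwo {k k' a b : Lit} (hkk' : Iex Θ k k')
    (ha : Imp Θ k a ∨ Imp Θ k' a) (hb : Imp Θ k b ∨ Imp Θ k' b) : Iex Θ a b := by
  rcases ha with ha | ha <;> rcases hb with hb | hb
  · exact exSym Θ (exD Θ (exSym Θ (exD Θ (exI Θ hkk') ha)) hb)
  · exact exD Θ (exSym Θ (exD Θ (exSym Θ hkk') hb)) ha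
  · exact exD Θ (exSym Θ (exD Θ hkk' hb)) ha
  · exact exSym Θ (exD Θ (exSym Θ (exD Θ (exI Θ (exSym Θ hkk')) ha)) hb)

lemma seedFine_pair {x y k k' : Lit} (hnxy : ¬ Iex Θ x y) (hkk' : Iex Θ k k') :
    Fine Θ x y {q | Imp Θ k q ∨ Imp Θ k' q} := by
  refine ⟨?_, ?_, ?_⟩
  · rintro q (h | h) w hw
    · exact Or.inl (impB Θ h hw)
    · exact Or.inr (impB Θ h hw)
  · intro q hq hqb
    exact noSelfBar Θ hnxy (exTwo Θ hkk' hq hqb)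
  · rintro ⟨hx, hy⟩
    exact hnxy (exTwo Θ hkk' hx hy)

lemma completeness_model (hΘ : Θ ⊆ FragSdag) (x y : Lit) (hnxy : ¬ Iex Θ x y) :
    ∃ (A : Type) (_ : Nonempty A) (M : Interp A),
      M.SatSet Θ ∧ (∀ a : A, a ∈ M.litI x → a ∈ M.litI y → False) ∧
      (∀ U₀ : Set Lit, Fine Θ x y U₀ → ∃ a : A, ∀ l ∈ U₀, a ∈ M.litI l) := by
  classical
  obtain ⟨W, -, hW⟩ := exists_maxFine Θ (fine_empty Θ x y)
  set A := {U : Set Lit // Maximal (Fine Θ x y) U} with hAdef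
  set M : Interp A := ⟨fun p => {U : A | Lit.pos p ∈ U.val}, fun _ => ∅⟩ with hMdef
  have char : ∀ (U : A) (l : Lit), U ∈ M.litI l ↔ l ∈ U.val := by
    intro U l
    cases l with
    | pos p => exact Iff.rfl
    | neg p =>
        constructor
        · intro h
          rcases maxFine_complete Θ hnxy U.prop p with h' | h'
          · exact absurd h' h
          · exact h'
        · intro h hmem
          exact U.prop.1.2.1 _ h hmem
  refine ⟨A, ⟨⟨W, hW⟩⟩, M, ?_, ?_, ?_⟩
  · intro θ' hθ'
    rcases hΘ hθ' with ⟨k, k', hf | hf⟩ <;> subst hf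
    · have hkk' : Iex Θ k k' := Derives.mem hθ'
      obtain ⟨U, hsub, hmax⟩ := exists_maxFine Θ (seedFine_pair Θ hnxy hkk')
      exact ⟨⟨U, hmax⟩, (char ⟨U, hmax⟩ k).2 (hsub (Or.inl (impT Θ k))),
        (char ⟨U, hmax⟩ k').2 (hsub (Or.inr (impT Θ k')))⟩
    · intro U hUk
      exact (char U k').2 (U.prop.1.1 k ((char U k).1 hUk) k' (Derives.mem hθ'))
  · intro a hx hy
    exact a.prop.1.2.2 ⟨(char a x).1 hx, (char a y).1 hy⟩
  · intro V hV
    obtain ⟨U, hsub, hmax⟩ := exists_maxFine Θ hV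
    exact ⟨⟨U, hmax⟩, fun l hl => (char ⟨U, hmax⟩ l).2 (hsub hl)⟩

end Completeness

theorem Sdag_complete_aux {Θ : Set Formula} {θ : Formula}
    (hΘ : Θ ⊆ FragSdag) (hθ : θ ∈ FragSdag) (hent : Entails Θ θ) :
    Derives RuleSetSdag Θ θ := by
  by_contra hnd
  obtain ⟨l, m, hc | hc⟩ := hθ <;> subst hc
  · -- θ = ∃(l,m)
    have hnxy : ¬ Iex Θ l m := hnd
    obtain ⟨A, hA, M, hsat, hno, -⟩ := completeness_model Θ hΘ l m hnxy
    obtain ⟨a, ha1, ha2⟩ := hent A hA M hsat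
    exact hno a ha1 ha2
  · -- θ = ∀(l,m)
    have hnxy : ¬ Iex Θ (Lit.pos 0) (Lit.neg 0) := by
      intro h
      exact hnd (exX Θ _ (by exact ⟨l, m, Or.inr rfl⟩) h (impT Θ (Lit.pos 0)))
    have hcompl : ∀ q, (Imp Θ l q ∨ Imp Θ m.bar q) →
        (Imp Θ l q.bar ∨ Imp Θ m.bar q.bar) → False := by
      rintro q (hq | hq) (hqb | hqb) <;> apply hnd
      · exact impA Θ m (impB Θ hq (impContra' Θ hqb))
      · exact impB Θ hq (impContra3 Θ hqb)
      · exact impB Θ hqb (impContra'' Θ hq)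
      · exact impUniv Θ (impB Θ hq (impContra3 Θ hqb)) l
    have hseed : Fine Θ (Lit.pos 0) (Lit.neg 0) {q | Imp Θ l q ∨ Imp Θ m.bar q} := by
      refine ⟨?_, ?_, ?_⟩
      · rintro q (h | h) w hw
        · exact Or.inl (impB Θ h hw)
        · exact Or.inr (impB Θ h hw)
      · intro q hq hqb
        exact hcompl q hq hqb
      · rintro ⟨hx, hy⟩
        exact hcompl (Lit.pos 0) hx hy
    obtain ⟨A, hA, M, hsat, -, hreal⟩ := completeness_model Θ hΘ _ _ hnxy
    obtain ⟨a, ha⟩ := hreal _ hseed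
    have hal := hent A hA M hsat
    have h1 : a ∈ M.litI l := ha l (Or.inl (impT Θ l))
    have h2 : a ∈ M.litI m.bar := ha m.bar (Or.inr (impT Θ m.bar))
    rw [litI_bar] at h2
    exact h2 (hal h1)


/-- `⊢_{S†}` is sound and complete for the fragment `S†`. -/
theorem Sdag_sound_and_complete (Θ : Set Formula) (θ : Formula)
    (hΘ : Θ ⊆ FragSdag) (hθ : θ ∈ FragSdag) :
    Derives RuleSetSdag Θ θ ↔ Entails Θ θ :=
  ⟨sdag_sound, Sdag_complete_aux hΘ hθ⟩

end Syllogistic
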